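/- arXiv:2305.11344 — 8 statements merged into one kernel-verified Lean document; each statement's English description precedes it below -/
import Mathlib

section
/- The maps α and η form a bijective pair between binary relations X ↔ Y and inner deterministic multirelations X ↔ 𝒫Y: α(η(R)) = R for every relation R, and η(α(S)) = S for every inner deterministic multirelation S. -/
universe u v w x

variable {X : Type u} {Y : Type v} {Z : Type w} {W : Type x}

/-- Relational composition. -/
def rcomp (R : Set (X × Y)) (S : Set (Y × Z)) : Set (X × Z) :=
  {p | ∃ b, (p.1, b) ∈ R ∧ (b, p.2) ∈ S}

/-- Power transpose Λ. -/
def Lam (R : Set (X × Y)) : Set (X × Set Y) :=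
  {p | p.2 = {b | (p.1, b) ∈ R}}

/-- α : postcomposition with the has-element relation. -/
def alphaM (S : Set (X × Set Y)) : Set (X × Y) :=
  {p | ∃ B, (p.1, B) ∈ S ∧ p.2 ∈ B}

/-- η : singleton embedding. -/
def etaM (R : Set (X × Y)) : Set (X × Set Y) :=
  {p | ∃ b, (p.1, b) ∈ R ∧ p.2 = {b}}

/-- Peleg composition. -/
def peleg (R : Set (X × Set Y)) (S : Set (Y × Set Z)) : Set (X × Set Z) :=
  {p | ∃ B, (p.1, B) ∈ R ∧ ∃ f : Y → Set Z, (∀ b ∈ B, (b, f b) ∈ S) ∧ p.2 = ⋃ b ∈ B, f b}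

/-- Outer deterministic: each element relates to exactly one set. -/
def OuterDet (R : Set (X × Set Y)) : Prop := ∀ a, ∃! B, (a, B) ∈ R

/-- Inner deterministic: every related set is a singleton. -/
def InnerDet (R : Set (X × Set Y)) : Prop := ∀ a B, (a, B) ∈ R → ∃ b, B = {b}

/-- Inner univalent: every related set is empty or a singleton. -/
def InnerUniv (R : Set (X × Set Y)) : Prop := ∀ a B, (a, B) ∈ R → B = ∅ ∨ ∃ b, B = {b}

/-- The unit 1_X. -/
def oneM (X : Type u) : Set (X × Set X) := {p | p.2 = {p.1}}

/-- Identity relation. -/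
def idR (X : Type u) : Set (X × X) := {p | p.1 = p.2}

/-- Hoare preorder ⊑↓. -/
def hle (R S : Set (X × Set Y)) : Prop := ∀ a A, (a, A) ∈ R → ∃ B, (a, B) ∈ S ∧ A ⊆ B

/-- Smyth preorder ⊑↑. -/
def sle (P Q : Set (X × Set Y)) : Prop := ∀ a B, (a, B) ∈ Q → ∃ A, (a, A) ∈ P ∧ A ⊆ B

/-- Down-closure. -/
def downCl (R : Set (X × Set Y)) : Set (X × Set Y) := {p | ∃ B, (p.1, B) ∈ R ∧ p.2 ⊆ B}

/-- Atoms: pairs whose second component is a singleton. -/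
def atomsM (X : Type u) (Y : Type v) : Set (X × Set Y) := {p | ∃ b, p.2 = {b}}

/-- Terminal part τ(R). -/
def tauM (R : Set (X × Set Y)) : Set (X × Set Y) := {p ∈ R | p.2 = ∅}

/-- Terminal part of R viewed as a multirelation into any other powerset. -/
def tauAs (R : Set (X × Set Y)) : Set (X × Set Z) := {p | (p.1, (∅ : Set Y)) ∈ R ∧ p.2 = ∅}

/-- Outer determinisation (fusion). -/
def deltaO (R : Set (X × Set Y)) : Set (X × Set Y) := Lam (alphaM R)

/-- Inner determinisation (fission). -/
def deltaI (R : Set (X × Set Y)) : Set (X × Set Y) := etaM (alphaM R)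

theorem alphaM_etaM (R : Set (X × Y)) : alphaM (etaM R) = R := by
  ext ⟨a, b⟩
  simp [alphaM, etaM]

theorem mem_alphaM_iff_of_innerDet {S : Set (X × Set Y)} (hS : InnerDet S) {a : X} {b : Y} :
    (a, b) ∈ alphaM S ↔ (a, {b}) ∈ S := by
  constructor
  · rintro ⟨B, hB, hb⟩
    obtain ⟨c, rfl⟩ := hS a B hB
    obtain rfl : b = c := hb
    exact hB
  · exact fun h => ⟨{b}, h, rfl⟩

theorem etaM_alphaM_of_innerDet {S : Set (X × Set Y)} (hS : InnerDet S) :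
    etaM (alphaM S) = S := by
  ext ⟨a, B⟩
  constructor
  · rintro ⟨b, hb, rfl⟩
    exact (mem_alphaM_iff_of_innerDet hS).mp hb
  · intro h
    obtain ⟨b, rfl⟩ := hS a B h
    exact ⟨b, (mem_alphaM_iff_of_innerDet hS).mpr h, rfl⟩

theorem stmt3 :
    (∀ R : Set (X × Y), alphaM (etaM R) = R) ∧
    (∀ S : Set (X × Set Y), InnerDet S → etaM (alphaM S) = S) :=
  ⟨alphaM_etaM, fun _ => etaM_alphaM_of_innerDet⟩
end

section
/- If R : X ↔ 𝒫Y is inner deterministic and S : Y ↔ 𝒫Z, T : Z ↔ 𝒫W are arbitrary multirelations, then Peleg composition associates: R ∗ (S ∗ T) = (R ∗ S) ∗ T. -/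
universe u v w x

variable {X : Type u} {Y : Type v} {Z : Type w} {W : Type x}

/-!
An inner deterministic `R` relates each `a` only to singletons `{b}`, and the union in `R ∗ Q`
over a singleton is a single value of the choice function; so `R ∗ Q` is just
"`R` relates `a` to some `{b}` and `Q` relates `b` to `C`". Both sides of the associativity law
then unfold to the same statement: `R` relates `a` to `{b}`, `S` relates `b` to `B`, and `D` is a
union over `B` of sets related to their index by `T`.
-/

lemma mem_peleg_of_singleton_mem {R : Set (X × Set Y)} {Q : Set (Y × Set Z)} {a : X} {b : Y}
    {C : Set Z} (hb : (a, {b}) ∈ R) (hC : (b, C) ∈ Q) : (a, C) ∈ peleg R Q :=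
  ⟨{b}, hb, fun _ => C, by rintro _ rfl; exact hC, by simp⟩

lemma mem_peleg_iff_of_innerDet {R : Set (X × Set Y)} (hR : InnerDet R) {Q : Set (Y × Set Z)}
    {a : X} {C : Set Z} : (a, C) ∈ peleg R Q ↔ ∃ b, (a, {b}) ∈ R ∧ (b, C) ∈ Q := by
  refine ⟨?_, fun ⟨b, hb, hC⟩ => mem_peleg_of_singleton_mem hb hC⟩
  rintro ⟨B, hB, f, hf, rfl⟩
  obtain ⟨b, rfl⟩ := hR a B hB
  exact ⟨b, hB, by simpa using hf b rfl⟩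

theorem stmt5 (R : Set (X × Set Y)) (S : Set (Y × Set Z)) (T : Set (Z × Set W))
    (hR : InnerDet R) :
    peleg R (peleg S T) = peleg (peleg R S) T := by
  ext ⟨a, D⟩
  rw [mem_peleg_iff_of_innerDet hR]
  constructor
  · rintro ⟨b, hb, B, hB, g, hg, rfl⟩
    exact ⟨B, mem_peleg_of_singleton_mem hb hB, g, hg, rfl⟩
  · rintro ⟨B, hB, g, hg, rfl⟩
    obtain ⟨b, hb, hbB⟩ := (mem_peleg_iff_of_innerDet hR).mp hB
    exact ⟨b, hb, B, hbB, g, hg, rfl⟩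
end

section
/- For relations R : X ↔ Y and S : Y ↔ Z, η(R ; S) = η(R) ∗ η(S), where ; is relational composition and ∗ is Peleg composition; moreover η(Id_X) = 1_X = {(a,{a}) | a ∈ X}. -/
universe u v w x

variable {X : Type u} {Y : Type v} {Z : Type w} {W : Type x}

-- Every left-hand set of `etaM R` is a singleton `{b}`, over which `⋃ b ∈ B, f b` is just `f b`.
theorem mem_peleg_etaM_left (R : Set (X × Y)) (T : Set (Y × Set Z)) (a : X) (C : Set Z) :
    (a, C) ∈ peleg (etaM R) T ↔ ∃ b, (a, b) ∈ R ∧ (b, C) ∈ T := by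
  constructor
  · rintro ⟨_, ⟨b, hab, rfl⟩, f, hf, rfl⟩
    simpa using ⟨b, hab, hf b rfl⟩
  · rintro ⟨b, hab, hbC⟩
    exact ⟨{b}, ⟨b, hab, rfl⟩, fun _ => C, fun b' hb' => hb' ▸ hbC, by simp⟩

theorem etaM_rcomp (R : Set (X × Y)) (S : Set (Y × Z)) :
    etaM (rcomp R S) = peleg (etaM R) (etaM S) := by
  ext ⟨a, C⟩
  rw [mem_peleg_etaM_left]
  simp only [etaM, rcomp, Set.mem_ofPred_eq]
  constructor
  · rintro ⟨c, ⟨b, hab, hbc⟩, rfl⟩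
    exact ⟨b, hab, c, hbc, rfl⟩
  · rintro ⟨b, hab, c, hbc, rfl⟩
    exact ⟨c, ⟨b, hab, hbc⟩, rfl⟩

theorem etaM_idR (X : Type u) : etaM (idR X) = oneM X := by
  ext ⟨a, B⟩
  simp [etaM, idR, oneM]

theorem stmt6 (R : Set (X × Y)) (S : Set (Y × Z)) :
    etaM (rcomp R S) = peleg (etaM R) (etaM S) ∧ etaM (idR X) = oneM X :=
  ⟨etaM_rcomp R S, etaM_idR X⟩
end

section
/- For relations R : X ↔ Y and S : Y ↔ Z, Λ(R ; S) = Λ(R) ∗ Λ(S), and Λ(Id_X) = 1_X = {(a,{a}) | a ∈ X}, where ∗ is Peleg composition. -/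
universe u v w x

variable {X : Type u} {Y : Type v} {Z : Type w} {W : Type x}

theorem mem_Lam {R : Set (X × Y)} {a : X} {B : Set Y} :
    (a, B) ∈ Lam R ↔ B = {b | (a, b) ∈ R} :=
  Iff.rfl

theorem mem_peleg {P : Set (X × Set Y)} {Q : Set (Y × Set Z)} {a : X} {C : Set Z} :
    (a, C) ∈ peleg P Q ↔
      ∃ B, (a, B) ∈ P ∧ ∃ f : Y → Set Z, (∀ b ∈ B, (b, f b) ∈ Q) ∧ C = ⋃ b ∈ B, f b :=
  Iff.rfl

theorem mem_oneM {a : X} {A : Set X} : (a, A) ∈ oneM X ↔ A = {a} :=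
  Iff.rfl

theorem image_rcomp_eq_biUnion (R : Set (X × Y)) (S : Set (Y × Z)) (a : X) :
    {c | (a, c) ∈ rcomp R S} = ⋃ b ∈ {b | (a, b) ∈ R}, {c | (b, c) ∈ S} := by
  ext c
  simp [rcomp]

-- In `peleg (Lam R) (Lam S)` both the intermediate set and the choice function on it are forced.
theorem Lam_rcomp (R : Set (X × Y)) (S : Set (Y × Z)) :
    Lam (rcomp R S) = peleg (Lam R) (Lam S) := by
  ext ⟨a, C⟩
  simp only [mem_Lam, mem_peleg, image_rcomp_eq_biUnion]
  constructor
  · rintro rfl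
    exact ⟨_, rfl, fun b => {c | (b, c) ∈ S}, fun _ _ => rfl, rfl⟩
  · rintro ⟨B, rfl, f, hf, rfl⟩
    exact Set.iUnion₂_congr hf

theorem Lam_idR (X : Type u) : Lam (idR X) = oneM X := by
  ext ⟨a, A⟩
  have image_idR : {b | (a, b) ∈ idR X} = {a} := Set.ext fun _ => eq_comm
  rw [mem_Lam, mem_oneM, image_idR]

theorem stmt7 (R : Set (X × Y)) (S : Set (Y × Z)) :
    Lam (rcomp R S) = peleg (Lam R) (Lam S) ∧ Lam (idR X) = oneM X :=
  ⟨Lam_rcomp R S, Lam_idR X⟩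
end

section
/- If R : X ↔ 𝒫Y and S : Y ↔ 𝒫Z are both outer deterministic (graphs of functions), then R ∗ S is outer deterministic; if both are inner deterministic (all related sets are singletons), then R ∗ S is inner deterministic. -/
universe u v w x

variable {X : Type u} {Y : Type v} {Z : Type w} {W : Type x}

theorem OuterDet.peleg {R : Set (X × Set Y)} {S : Set (Y × Set Z)} (hR : OuterDet R)
    (hS : OuterDet S) : OuterDet (peleg R S) := by
  intro a
  obtain ⟨B, hB, hB_unique⟩ := hR a
  choose g hg hg_unique using hS
  refine ⟨⋃ b ∈ B, g b, ⟨B, hB, g, fun b _ => hg b, rfl⟩, ?_⟩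
  rintro C ⟨B', hB', f, hf, rfl⟩
  obtain rfl := hB_unique B' hB'
  exact Set.iUnion₂_congr fun b hb => hg_unique b (f b) (hf b hb)

theorem InnerDet.peleg {R : Set (X × Set Y)} {S : Set (Y × Set Z)} (hR : InnerDet R)
    (hS : InnerDet S) : InnerDet (peleg R S) := by
  rintro a C ⟨B, hB, f, hf, rfl⟩
  obtain ⟨b, rfl⟩ := hR a B hB
  obtain ⟨c, hc⟩ := hS b (f b) (hf b rfl)
  exact ⟨c, by rw [Set.biUnion_singleton, hc]⟩

theorem stmt8 (R : Set (X × Set Y)) (S : Set (Y × Set Z)) :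
    (OuterDet R → OuterDet S → OuterDet (peleg R S)) ∧
    (InnerDet R → InnerDet S → InnerDet (peleg R S)) :=
  ⟨OuterDet.peleg, InnerDet.peleg⟩
end

section
/- Peleg composition of outer deterministic multirelations is associative: if R : X ↔ 𝒫Y, S : Y ↔ 𝒫Z, T : Z ↔ 𝒫W are all outer deterministic, then (R ∗ S) ∗ T = R ∗ (S ∗ T). -/
universe u v w x

variable {X : Type u} {Y : Type v} {Z : Type w} {W : Type x}

theorem stmt9 (R : Set (X × Set Y)) (S : Set (Y × Set Z)) (T : Set (Z × Set W))
    (hR : OuterDet R) (hS : OuterDet S) (hT : OuterDet T) :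
    peleg (peleg R S) T = peleg R (peleg S T) := by
  classical
  set g : Y → Set Z := fun b => (hS b).choose with hg
  have hgS : ∀ b, (b, g b) ∈ S := fun b => (hS b).choose_spec.1
  have hgU : ∀ b C, (b, C) ∈ S → C = g b := fun b C hC => (hS b).choose_spec.2 C hC
  set t : Z → Set W := fun c => (hT c).choose with ht
  have htT : ∀ c, (c, t c) ∈ T := fun c => (hT c).choose_spec.1
  have htU : ∀ c C, (c, C) ∈ T → C = t c := fun c C hC => (hT c).choose_spec.2 C hC
  ext ⟨a, D⟩
  simp only [peleg, Set.mem_setOf_eq]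
  constructor
  · rintro ⟨C, ⟨B, hB, f, hf, rfl⟩, h, hh, rfl⟩
    refine ⟨B, hB, fun b => ⋃ c ∈ f b, h c, fun b hb => ?_, ?_⟩
    · exact ⟨f b, hf b hb, h, fun c hc => hh c (Set.mem_biUnion hb hc), rfl⟩
    · ext w; simp only [Set.mem_iUnion]; aesop
  · rintro ⟨B, hB, f, hf, rfl⟩
    have key : ∀ b ∈ B, f b = ⋃ c ∈ g b, t c := by
      intro b hb
      obtain ⟨Cb, hCb, h, hh, heq⟩ := hf b hb
      have hCbg : Cb = g b := hgU b Cb hCb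
      subst hCbg
      rw [heq]
      exact Set.iUnion₂_congr fun c hc => htU c (h c) (hh c hc)
    refine ⟨⋃ b ∈ B, g b, ⟨B, hB, g, fun b _ => hgS b, rfl⟩, t,
      fun c _ => htT c, ?_⟩
    have : (⋃ b ∈ B, f b) = ⋃ b ∈ B, ⋃ c ∈ g b, t c :=
      Set.iUnion₂_congr key
    rw [this]
    ext w
    simp only [Set.mem_iUnion]
    constructor
    · rintro ⟨b, hb, c, hc, hw⟩; exact ⟨c, ⟨b, hb, hc⟩, hw⟩
    · rintro ⟨c, ⟨b, hb, hc⟩, hw⟩; exact ⟨b, hb, c, hc, hw⟩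
end

section
/- δₒ(R) is the ⊑↓-least outer deterministic multirelation above R: R ⊑↓ δₒ(R), and if S is outer deterministic with R ⊑↓ S then δₒ(R) ⊑↓ S. Dually, δᵢ(R) is the ⊑↓-greatest inner deterministic multirelation below R. -/
universe u v w x

variable {X : Type u} {Y : Type v} {Z : Type w} {W : Type x}

theorem alphaM_mono_of_hle {R S : Set (X × Set Y)} (h : hle R S) : alphaM R ⊆ alphaM S := by
  rintro ⟨a, b⟩ ⟨A, hA, hbA⟩
  obtain ⟨B, hB, hAB⟩ := h a A hA
  exact ⟨B, hB, hAB hbA⟩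

theorem outerDet_deltaO (R : Set (X × Set Y)) : OuterDet (deltaO R) :=
  fun a => ⟨{b | (a, b) ∈ alphaM R}, rfl, fun _ hB => hB⟩

theorem hle_deltaO (R : Set (X × Set Y)) : hle R (deltaO R) :=
  fun a A hA => ⟨{b | (a, b) ∈ alphaM R}, rfl, fun _ hb => ⟨A, hA, hb⟩⟩

theorem deltaO_hle_of_outerDet {R S : Set (X × Set Y)} (hS : OuterDet S) (hRS : hle R S) :
    hle (deltaO R) S := by
  rintro a A (rfl : A = {b | (a, b) ∈ alphaM R})
  obtain ⟨B, hB, hB_unique⟩ := hS a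
  refine ⟨B, hB, fun b hb => ?_⟩
  obtain ⟨C, hC, hbC⟩ := alphaM_mono_of_hle hRS hb
  exact hB_unique C hC ▸ hbC

theorem innerDet_deltaI (R : Set (X × Set Y)) : InnerDet (deltaI R) := by
  rintro a A ⟨b, -, hA⟩
  exact ⟨b, hA⟩

theorem deltaI_hle (R : Set (X × Set Y)) : hle (deltaI R) R := by
  rintro a A ⟨b, ⟨B, hB, hbB⟩, rfl : A = {b}⟩
  exact ⟨B, hB, Set.singleton_subset_iff.mpr hbB⟩

theorem hle_deltaI_of_innerDet {R S : Set (X × Set Y)} (hS : InnerDet S) (hSR : hle S R) :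
    hle S (deltaI R) := by
  intro a A hA
  obtain ⟨b, rfl⟩ := hS a A hA
  have hb : (a, b) ∈ alphaM R := alphaM_mono_of_hle hSR ⟨{b}, hA, rfl⟩
  exact ⟨{b}, ⟨b, hb, rfl⟩, subset_rfl⟩

theorem stmt16 (R : Set (X × Set Y)) :
    (OuterDet (deltaO R) ∧ hle R (deltaO R) ∧
      ∀ S : Set (X × Set Y), OuterDet S → hle R S → hle (deltaO R) S) ∧
    (InnerDet (deltaI R) ∧ hle (deltaI R) R ∧
      ∀ S : Set (X × Set Y), InnerDet S → hle S R → hle S (deltaI R)) :=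
  ⟨⟨outerDet_deltaO R, hle_deltaO R, fun _ => deltaO_hle_of_outerDet⟩,
    ⟨innerDet_deltaI R, deltaI_hle R, fun _ => hle_deltaI_of_innerDet⟩⟩
end

section
/- A multirelation R : X ↔ 𝒫Y is inner univalent (every related set is empty or a singleton) if and only if R = δᵢ(R) ∪ τ(R), where τ(R) = {(a,∅) | (a,∅) ∈ R} is its terminal part and δᵢ(R) = {(a,{b}) | ∃ B, (a,B) ∈ R ∧ b ∈ B}. -/
universe u v w x

variable {X : Type u} {Y : Type v} {Z : Type w} {W : Type x}

theorem InnerDet.innerUniv {R : Set (X × Set Y)} (h : InnerDet R) : InnerUniv R :=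
  fun a B hB => Or.inr (h a B hB)

theorem InnerUniv.union {R S : Set (X × Set Y)} (hR : InnerUniv R) (hS : InnerUniv S) :
    InnerUniv (R ∪ S) := by
  rintro a B (hB | hB)
  exacts [hR a B hB, hS a B hB]

theorem innerUniv_tauM (R : Set (X × Set Y)) : InnerUniv (tauM R) :=
  fun _ _ hB => Or.inl hB.2

theorem tauM_subset (R : Set (X × Set Y)) : tauM R ⊆ R :=
  Set.sep_subset R _

theorem InnerUniv.deltaI_subset {R : Set (X × Set Y)} (h : InnerUniv R) : deltaI R ⊆ R := by
  rintro ⟨a, _⟩ ⟨b, ⟨C, hC, hbC⟩, rfl⟩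
  rcases h a C hC with rfl | ⟨c, rfl⟩
  · exact absurd hbC (Set.notMem_empty b)
  · obtain rfl : b = c := hbC
    exact hC

theorem InnerUniv.subset_deltaI_union_tauM {R : Set (X × Set Y)} (h : InnerUniv R) :
    R ⊆ deltaI R ∪ tauM R := by
  rintro ⟨a, B⟩ hB
  rcases h a B hB with hB₀ | ⟨b, rfl⟩
  · exact Or.inr ⟨hB, hB₀⟩
  · exact Or.inl ⟨b, ⟨{b}, hB, rfl⟩, rfl⟩

theorem stmt17 (R : Set (X × Set Y)) :
    InnerUniv R ↔ R = deltaI R ∪ tauM R := by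
  refine ⟨fun h => ?_, fun h => ?_⟩
  · exact h.subset_deltaI_union_tauM.antisymm (Set.union_subset h.deltaI_subset (tauM_subset R))
  · rw [h]
    exact (innerDet_deltaI R).innerUniv.union (innerUniv_tauM R)
end
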